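/- Let 0 < m < L, K a positive integer, and let σ be any permutation of {1, ..., K}. With r_k = (L+m)/2 - ((L-m)/2)·cos(((k-1/2)π)/K), for every λ ∈ [m, L] we have |∏_{k=1}^K cos((π/2)·√(λ/r_{σ(k)}))| ≤ 2·(1 - 2√m/(√L + √m))^K. -/

import Mathlib

/-!
The nodes `r_k` are the images of the roots `cos ((2k+1)π/(2K))` of the Chebyshev polynomial `T_K`
under the decreasing affine map from `[-1, 1]` onto `[m, L]`. Hence `∏ₖ (1 - λ / r_k)` is `T_K` evaluated at
the preimage of `λ`, normalised by its value at the preimage of `0`; the numerator is at most `1`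
in absolute value on `[m, L]`, while the preimage of `0` is `cosh a` with
`exp a = (√L + √m) / (√L - √m)`, so the denominator `cosh (K a)` grows geometrically.
Each cosine factor is bounded by `|1 - λ / r_k|` factorwise, and the product does not see `σ`.
-/

open Real Polynomial Polynomial.Chebyshev Finset

namespace Polynomial.Chebyshev

theorem eval_T_real_eq_prod (n : ℕ) (y : ℝ) :
    (T ℝ n).eval y = 2 ^ (n - 1) * ∏ k ∈ range n, (y - cos ((2 * k + 1) * π / (2 * n))) := by
  have hinj := (range n).nodup_map_iff_injOn.mp (roots_T_real_nodup n)
  have hcard : Multiset.card (T ℝ n).roots = (T ℝ n).natDegree := by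
    rw [roots_T_real, natDegree_T, Int.natAbs_natCast, Finset.card_val,
      Finset.card_image_of_injOn hinj, card_range]
  conv_lhs => rw [← C_leadingCoeff_mul_prod_multiset_X_sub_C hcard]
  rw [leadingCoeff_T, Int.natAbs_natCast, eval_mul, eval_C, eval_multiset_prod, roots_T_real,
    Multiset.map_map, ← Finset.prod_eq_multiset_prod, Finset.prod_image hinj]
  simp

theorem eval_T_real_half_add_inv (n : ℕ) {u : ℝ} (hu : 0 < u) :
    (T ℝ n).eval ((u + u⁻¹) / 2) = (u ^ n + (u ^ n)⁻¹) / 2 := by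
  rw [← cosh_log hu, T_real_cosh, ← cosh_log (pow_pos hu n), log_pow]
  norm_cast

end Polynomial.Chebyshev

namespace Real

theorem cos_pi_div_two_mul_le_one_sub_sq {s : ℝ} (hs₀ : 0 ≤ s) (hs₁ : s ≤ 1) :
    cos (π / 2 * s) ≤ 1 - s ^ 2 := by
  -- `cos (2y) = 1 - 2 sin² y`, and concavity of `sin` bounds `sin (π/4 * s)` below by the chord
  have hchord : s * sin (π / 4) ≤ sin (π / 4 * s) := by
    have := strictConcaveOn_sin_Icc.concaveOn.2 (x := 0) (y := π / 4)
      ⟨le_rfl, pi_pos.le⟩ ⟨by positivity, by linarith [pi_pos]⟩ (sub_nonneg.2 hs₁) hs₀ (by ring)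
    simpa [mul_comm] using this
  rw [sin_pi_div_four] at hchord
  have hsq : s ^ 2 / 2 ≤ sin (π / 4 * s) ^ 2 := by
    have h2 : (√2 / 2) ^ 2 = 1 / 2 := by rw [div_pow, sq_sqrt zero_le_two]; norm_num
    nlinarith [pow_le_pow_left₀ (by positivity) hchord 2]
  have hdouble : cos (π / 2 * s) = 1 - 2 * sin (π / 4 * s) ^ 2 := by
    rw [← cos_two_mul_eq_one_sub]; ring_nf
  linarith

theorem abs_cos_pi_div_two_mul_sqrt_le (x : ℝ) (hx : 0 ≤ x) :
    |cos (π / 2 * √x)| ≤ |1 - x| := by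
  obtain ⟨s, hs, rfl⟩ : ∃ s, 0 ≤ s ∧ s ^ 2 = x := ⟨√x, sqrt_nonneg x, sq_sqrt hx⟩
  rw [sqrt_sq hs]
  rcases le_total s 1 with hs₁ | hs₁
  · have hcos : 0 ≤ cos (π / 2 * s) :=
      cos_nonneg_of_mem_Icc ⟨by nlinarith [pi_pos], by nlinarith [pi_pos]⟩
    rw [abs_of_nonneg hcos, abs_of_nonneg (by nlinarith)]
    exact cos_pi_div_two_mul_le_one_sub_sq hs hs₁
  · calc |cos (π / 2 * s)| = |sin (π / 2 * (1 - s))| := by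
          rw [← sin_pi_div_two_sub]; ring_nf
      _ ≤ |π / 2 * (1 - s)| := abs_sin_le_abs
      _ = π / 2 * |1 - s| := by rw [abs_mul, abs_of_pos (by positivity)]
      _ ≤ (1 + s) * |1 - s| := by gcongr; linarith [pi_lt_four]
      _ = |1 - s ^ 2| := by rw [← abs_of_pos (by linarith : 0 < 1 + s), ← abs_mul]; ring_nf

end Real

noncomputable def shiftedChebyshev (m L : ℝ) (n : ℕ) (x : ℝ) : ℝ :=
  (T ℝ n).eval ((L + m - 2 * x) / (L - m)) / (T ℝ n).eval ((L + m) / (L - m))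

theorem prod_one_sub_div_eq_shiftedChebyshev {m L : ℝ} (hm : 0 < m) (hmL : m < L) (n : ℕ)
    (x : ℝ) :
    ∏ k ∈ range n, (1 - x / ((L + m) / 2 - (L - m) / 2 * cos ((2 * k + 1) * π / (2 * n)))) =
      shiftedChebyshev m L n x := by
  have hLm : 0 < L - m := sub_pos.2 hmL
  have hfactor : ∀ k ∈ range n,
      1 - x / ((L + m) / 2 - (L - m) / 2 * cos ((2 * k + 1) * π / (2 * n))) =
        ((L + m - 2 * x) / (L - m) - cos ((2 * k + 1) * π / (2 * n))) /
          ((L + m) / (L - m) - cos ((2 * k + 1) * π / (2 * n))) := by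
    intro k _
    have hc := cos_le_one ((2 * k + 1) * π / (2 * n))
    generalize cos ((2 * k + 1) * π / (2 * n)) = c at hc ⊢
    have ht : (L + m) / (L - m) - c ≠ 0 := by
      rw [sub_ne_zero]; refine (lt_of_le_of_lt hc ?_).ne'
      rw [one_lt_div hLm]; linarith
    have hr : (L + m) / 2 - (L - m) / 2 * c = (L - m) / 2 * ((L + m) / (L - m) - c) := by
      field_simp
    rw [hr, show (L + m - 2 * x) / (L - m) - c = ((L + m) / (L - m) - c) - 2 * x / (L - m) by ring]
    generalize (L + m) / (L - m) - c = A at ht ⊢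
    field_simp
  rw [prod_congr rfl hfactor, prod_div_distrib, shiftedChebyshev, eval_T_real_eq_prod,
    eval_T_real_eq_prod, mul_div_mul_left _ _ (by positivity)]

theorem abs_shiftedChebyshev_le {m L : ℝ} (hm : 0 < m) (hmL : m < L) (n : ℕ) {x : ℝ}
    (hx : x ∈ Set.Icc m L) :
    |shiftedChebyshev m L n x| ≤ 2 * (1 - 2 * √m / (√L + √m)) ^ n := by
  have hLm : 0 < L - m := sub_pos.2 hmL
  have hsm : 0 < √m := sqrt_pos.2 hm
  have hsmL : √m < √L := sqrt_lt_sqrt hm.le hmL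
  set u := (√L + √m) / (√L - √m) with hu
  have hu0 : 0 < u := div_pos (by linarith) (by linarith)
  have hcenter : (L + m) / (L - m) = (u + u⁻¹) / 2 := by
    have hL : √L ^ 2 = L := sq_sqrt (hm.le.trans hmL.le)
    have hm' : √m ^ 2 = m := sq_sqrt hm.le
    have hne : √L - √m ≠ 0 := by linarith
    rw [hu, inv_div]
    conv_lhs => rw [← hL, ← hm']
    have hsq : √L ^ 2 - √m ^ 2 ≠ 0 := by rw [hL, hm']; exact hLm.ne'
    field_simp
    ring
  have hden : u ^ n / 2 ≤ (T ℝ n).eval ((L + m) / (L - m)) := by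
    rw [hcenter, eval_T_real_half_add_inv n hu0]
    have := inv_pos.2 (pow_pos hu0 n)
    linarith
  have hnum : |(T ℝ n).eval ((L + m - 2 * x) / (L - m))| ≤ 1 := by
    refine abs_eval_T_real_le_one n (abs_le.2 ⟨?_, ?_⟩)
    · rw [le_div_iff₀ hLm]; linarith [hx.2]
    · rw [div_le_iff₀ hLm]; linarith [hx.1]
  have hratio : 1 - 2 * √m / (√L + √m) = u⁻¹ := by
    rw [hu, inv_div]; field_simp; ring
  have hun : 0 < u ^ n / 2 := by positivity
  calc |shiftedChebyshev m L n x|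
      = |(T ℝ n).eval ((L + m - 2 * x) / (L - m))| / (T ℝ n).eval ((L + m) / (L - m)) := by
        rw [shiftedChebyshev, abs_div, abs_of_pos (hun.trans_le hden)]
    _ ≤ 1 / (u ^ n / 2) := div_le_div₀ zero_le_one hnum hun hden
    _ = 2 * (1 - 2 * √m / (√L + √m)) ^ n := by rw [hratio, inv_pow]; field_simp

theorem stmt10_general (m L : ℝ) (hm : 0 < m) (hmL : m < L) (K : ℕ)
    (σ : Equiv.Perm (Fin K))
    (r : Fin K → ℝ)
    (hr : ∀ k : Fin K, r k =
      (L + m) / 2 - (L - m) / 2 * Real.cos ((((k : ℕ) : ℝ) + 1 - 1 / 2) * π / K))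
    (lam : ℝ) (hlam : lam ∈ Set.Icc m L) :
    |∏ k : Fin K, Real.cos (π / 2 * Real.sqrt (lam / r (σ k)))| ≤
      2 * (1 - 2 * Real.sqrt m / (Real.sqrt L + Real.sqrt m)) ^ K := by
  have hr' : ∀ k : Fin K, r k =
      (L + m) / 2 - (L - m) / 2 * cos ((2 * ((k : ℕ) : ℝ) + 1) * π / (2 * K)) := by
    intro k
    rw [hr k]
    ring_nf
  have hr_pos : ∀ k, 0 < r k := fun k => by
    rw [hr' k]
    nlinarith [cos_le_one ((2 * ((k : ℕ) : ℝ) + 1) * π / (2 * K))]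
  calc |∏ k : Fin K, cos (π / 2 * √(lam / r (σ k)))|
      = ∏ k : Fin K, |cos (π / 2 * √(lam / r k))| := by
        rw [abs_prod]
        exact Equiv.prod_comp σ fun k => |cos (π / 2 * √(lam / r k))|
    _ ≤ ∏ k : Fin K, |1 - lam / r k| :=
        prod_le_prod (fun _ _ => abs_nonneg _) fun k _ =>
          abs_cos_pi_div_two_mul_sqrt_le _ (div_nonneg (hm.le.trans hlam.1) (hr_pos k).le)
    _ = |shiftedChebyshev m L K lam| := by
        rw [← abs_prod, ← prod_one_sub_div_eq_shiftedChebyshev hm hmL,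
          ← Fin.prod_univ_eq_prod_range (fun k : ℕ => 1 - lam / ((L + m) / 2 -
            (L - m) / 2 * cos ((2 * k + 1) * π / (2 * K))))]
        simp only [hr']
    _ ≤ 2 * (1 - 2 * √m / (√L + √m)) ^ K := abs_shiftedChebyshev_le hm hmL K hlam

theorem stmt10 (m L : ℝ) (hm : 0 < m) (hmL : m < L) (K : ℕ) (hK : 0 < K)
    (σ : Equiv.Perm (Fin K))
    (r : Fin K → ℝ)
    (hr : ∀ k : Fin K, r k =
      (L + m) / 2 - (L - m) / 2 * Real.cos ((((k : ℕ) : ℝ) + 1 - 1 / 2) * π / K))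
    (lam : ℝ) (hlam : lam ∈ Set.Icc m L) :
    |∏ k : Fin K, Real.cos (π / 2 * Real.sqrt (lam / r (σ k)))| ≤
      2 * (1 - 2 * Real.sqrt m / (Real.sqrt L + Real.sqrt m)) ^ K :=
  stmt10_general m L hm hmL K σ r hr lam hlam
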